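/- arXiv:0904.2759 — 2 statements merged into one kernel-verified Lean document; each statement's English description precedes it below -/
import Mathlib

section
/- Let V be a finite set, φ_v ∈ ℂ^V unit vectors for v ∈ V, T = ∑_{v} (e_v ⊗ φ_v)⟨e_v|, S the swap operator on ℂ^V ⊗ ℂ^V, and M = T† S T. Let α be a unit eigenvector of M with eigenvalue ρ. If |ρ| < 1, then the vectors |α,±⟩ = (I − (ρ ∓ i√(1 − ρ²)) S) T α satisfy ‖|α,±⟩‖ = √(2(1 − ρ²)), and for every ψ ∈ ℂ^V, |⟨T ψ, |α,±⟩⟩|² / ‖|α,±⟩‖² = (1/2) |⟨ψ, α⟩|². If |ρ| = 1, then ‖T α‖ = 1 and ⟨T ψ, T α⟩ = ⟨ψ, α⟩ for every ψ ∈ ℂ^V. -/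
open Matrix

noncomputable def specNorm {ι : Type} [Fintype ι] [DecidableEq ι] {𝕜 : Type} [RCLike 𝕜]
    (M : Matrix ι ι 𝕜) : ℝ :=
  ‖LinearMap.toContinuousLinearMap (Matrix.toEuclideanLin M)‖

/-- The standard Hermitian inner product `⟨x, y⟩ = ∑ i, conj (x i) * y i`. -/
noncomputable def dotc {ι : Type} [Fintype ι] (x y : ι → ℂ) : ℂ :=
  ∑ i, starRingEnd ℂ (x i) * y i

/-- Squared Euclidean norm. -/
noncomputable def norm2 {ι : Type} [Fintype ι] (x : ι → ℂ) : ℝ := ∑ i, ‖x i‖ ^ 2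

section Szegedy

variable {V : Type} [Fintype V] [DecidableEq V]

/-- The isometry `T = ∑_v (e_v ⊗ φ_v)⟨e_v|`, identifying `ℂ^V ⊗ ℂ^V` with `ℂ^(V × V)`. -/
def szT (φ : V → V → ℂ) : Matrix (V × V) V ℂ :=
  Matrix.of fun p v => if p.1 = v then φ v p.2 else 0

/-- The swap operator `S` on `ℂ^V ⊗ ℂ^V ≅ ℂ^(V × V)`. -/
def szS (V : Type) [Fintype V] [DecidableEq V] : Matrix (V × V) (V × V) ℂ :=
  Matrix.of fun p q => if p.1 = q.2 ∧ p.2 = q.1 then 1 else 0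

/-- The quantum walk unitary `U = (2 T T† − I) S`. -/
noncomputable def szU (φ : V → V → ℂ) : Matrix (V × V) (V × V) ℂ :=
  ((2 : ℂ) • (szT φ * (szT φ)ᴴ) - 1) * szS V

/-- The discriminant matrix `M = T† S T`. -/
noncomputable def szM (φ : V → V → ℂ) : Matrix V V ℂ :=
  (szT φ)ᴴ * szS V * szT φ

/-- The candidate eigenvector `|α,+⟩ = (I − (ρ − i√(1−ρ²)) S) Tα`. -/
noncomputable def szVecPlus (φ : V → V → ℂ) (α : V → ℂ) (ρ : ℝ) : V × V → ℂ :=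
  (szT φ).mulVec α -
    ((ρ : ℂ) - Complex.I * (Real.sqrt (1 - ρ ^ 2) : ℂ)) • (szS V).mulVec ((szT φ).mulVec α)

/-- The candidate eigenvector `|α,−⟩ = (I − (ρ + i√(1−ρ²)) S) Tα`. -/
noncomputable def szVecMinus (φ : V → V → ℂ) (α : V → ℂ) (ρ : ℝ) : V × V → ℂ :=
  (szT φ).mulVec α -
    ((ρ : ℂ) + Complex.I * (Real.sqrt (1 - ρ ^ 2) : ℂ)) • (szS V).mulVec ((szT φ).mulVec α)

end Szegedy

/-!
`Tα` and `STα` are unit vectors (`T` is an isometry, `S` a unitary involution) with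
`⟨Tα, STα⟩ = ⟨α, Mα⟩ = ρ`, and more generally `⟨Tψ, STα⟩ = ρ⟨ψ, α⟩`. The two coefficients
`c = ρ ∓ i√(1 − ρ²)` are the unimodular numbers with real part `ρ`, so expanding
`‖Tα − c STα‖² = 2 − 2ρ Re c = 2(1 − ρ²)` and `|⟨Tψ, Tα − c STα⟩| = |1 − cρ| |⟨ψ, α⟩|` with
`|1 − cρ|² = 1 − ρ²` gives both normalizations.
-/

section Dotc

variable {ι : Type} [Fintype ι]

lemma dotc_eq_star_dotProduct (x y : ι → ℂ) : dotc x y = star x ⬝ᵥ y := rfl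

lemma dotc_sub_left (x y z : ι → ℂ) : dotc (x - y) z = dotc x z - dotc y z := by
  simp only [dotc_eq_star_dotProduct, star_sub, sub_dotProduct]

lemma dotc_sub_right (x y z : ι → ℂ) : dotc x (y - z) = dotc x y - dotc x z := by
  simp only [dotc_eq_star_dotProduct, dotProduct_sub]

lemma dotc_smul_left (c : ℂ) (x y : ι → ℂ) : dotc (c • x) y = starRingEnd ℂ c * dotc x y := by
  simp only [dotc_eq_star_dotProduct, star_smul, smul_dotProduct, smul_eq_mul]; rfl

lemma dotc_smul_right (c : ℂ) (x y : ι → ℂ) : dotc x (c • y) = c * dotc x y := by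
  simp only [dotc_eq_star_dotProduct, dotProduct_smul, smul_eq_mul]

lemma conj_dotc (x y : ι → ℂ) : starRingEnd ℂ (dotc x y) = dotc y x := by
  simp only [dotc, map_sum, map_mul, Complex.conj_conj, mul_comm]

lemma ofReal_norm2 (x : ι → ℂ) : (norm2 x : ℂ) = dotc x x := by
  simp only [norm2, dotc, Complex.ofReal_sum, Complex.sq_norm,
    Complex.normSq_eq_conj_mul_self]

lemma dotc_mulVec_left {κ : Type} [Fintype κ] (A : Matrix ι κ ℂ) (x : κ → ℂ) (y : ι → ℂ) :
    dotc (A *ᵥ x) y = dotc x (Aᴴ *ᵥ y) := by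
  rw [dotc_eq_star_dotProduct, dotc_eq_star_dotProduct, star_mulVec, dotProduct_mulVec]

lemma dotc_mulVec_mulVec_of_conjTranspose_mul_self {κ : Type} [Fintype κ] [DecidableEq κ]
    {A : Matrix ι κ ℂ} (hA : Aᴴ * A = 1) (x y : κ → ℂ) :
    dotc (A *ᵥ x) (A *ᵥ y) = dotc x y := by
  rw [dotc_mulVec_left, mulVec_mulVec, hA, one_mulVec]

end Dotc

section UnitCoefficient

variable {ρ : ℝ} {c : ℂ}

lemma norm_ofReal_add_I_mul_eq_one {t : ℝ} (h : ρ ^ 2 + t ^ 2 = 1) :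
    ‖(ρ : ℂ) + Complex.I * t‖ = 1 := by
  rw [← pow_eq_one_iff_of_nonneg (norm_nonneg _) two_ne_zero, Complex.sq_norm, mul_comm,
    Complex.normSq_add_mul_I, h]

lemma norm_ofReal_sub_I_mul_eq_one {t : ℝ} (h : ρ ^ 2 + t ^ 2 = 1) :
    ‖(ρ : ℂ) - Complex.I * t‖ = 1 := by
  simpa [sub_eq_add_neg] using norm_ofReal_add_I_mul_eq_one (t := -t) (by rwa [neg_sq])

lemma norm_one_sub_mul_ofReal_sq (hc : ‖c‖ = 1) (hre : c.re = ρ) :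
    ‖1 - c * ρ‖ ^ 2 = 1 - ρ ^ 2 := by
  have him : c.im ^ 2 = 1 - ρ ^ 2 := by rw [← Complex.sq_norm_sub_sq_re, hc, hre, one_pow]
  rw [Complex.sq_norm, Complex.normSq_apply]
  simp only [Complex.sub_re, Complex.sub_im, Complex.mul_re, Complex.mul_im, Complex.one_re,
    Complex.one_im, Complex.ofReal_re, Complex.ofReal_im, hre]
  linear_combination ρ ^ 2 * him

variable {ι : Type} [Fintype ι] {u w : ι → ℂ}

lemma norm2_sub_smul_of_norm_eq_one (hu : dotc u u = 1) (hw : dotc w w = 1)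
    (huw : dotc u w = ρ) (hc : ‖c‖ = 1) (hre : c.re = ρ) :
    norm2 (u - c • w) = 2 * (1 - ρ ^ 2) := by
  have hwu : dotc w u = ρ := by rw [← conj_dotc, huw, Complex.conj_ofReal]
  have hcc : starRingEnd ℂ c * c = 1 := by
    rw [← Complex.normSq_eq_conj_mul_self, ← Complex.sq_norm, hc]; norm_num
  have hsum : c + starRingEnd ℂ c = 2 * ρ := by rw [Complex.add_conj, hre]; push_cast; ring
  apply Complex.ofReal_injective
  rw [ofReal_norm2]
  simp only [dotc_sub_left, dotc_sub_right, dotc_smul_left, dotc_smul_right, hu, hw, huw, hwu]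
  push_cast
  linear_combination hcc - ρ * hsum

lemma norm_dotc_sub_smul_sq_div (hρ : |ρ| < 1) (hu : dotc u u = 1) (hw : dotc w w = 1)
    (huw : dotc u w = ρ) (hc : ‖c‖ = 1) (hre : c.re = ρ) {x : ι → ℂ} {a : ℂ}
    (hxu : dotc x u = a) (hxw : dotc x w = ρ * a) :
    ‖dotc x (u - c • w)‖ ^ 2 / norm2 (u - c • w) = 1 / 2 * ‖a‖ ^ 2 := by
  have hρ2 : 1 - ρ ^ 2 ≠ 0 := by
    nlinarith [abs_lt.mp hρ, sq_abs ρ, abs_nonneg ρ]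
  have hxuw : dotc x (u - c • w) = (1 - c * ρ) * a := by
    rw [dotc_sub_right, dotc_smul_right, hxu, hxw]; ring
  rw [norm2_sub_smul_of_norm_eq_one hu hw huw hc hre, hxuw, norm_mul, mul_pow,
    norm_one_sub_mul_ofReal_sq hc hre]
  field_simp

end UnitCoefficient

section Szegedy

variable {V : Type} [Fintype V] [DecidableEq V]

lemma szT_conjTranspose_mul_szT {φ : V → V → ℂ} (hφ : ∀ v, ∑ w, ‖φ v w‖ ^ 2 = 1) :
    (szT φ)ᴴ * szT φ = 1 := by
  ext u v
  simp only [mul_apply, conjTranspose_apply, szT, of_apply, Fintype.sum_prod_type,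
    RCLike.star_def]
  rw [Finset.sum_eq_single u (fun a _ ha => by simp [ha]) (by simp)]
  by_cases h : u = v
  · subst h
    simp only [if_true, one_apply_eq]
    change dotc (φ u) (φ u) = 1
    rw [← ofReal_norm2, norm2, hφ u, Complex.ofReal_one]
  · simp [h, one_apply_ne h]

lemma szS_conjTranspose : (szS V)ᴴ = szS V := by
  ext p q
  simp only [szS, conjTranspose_apply, of_apply, eq_comm (a := p.1), eq_comm (a := p.2), and_comm]
  split_ifs <;> simp

lemma szS_mul_szS : szS V * szS V = 1 := by
  ext p q
  rw [mul_apply, Finset.sum_eq_single (p.2, p.1)]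
  · simp [szS, one_apply, Prod.ext_iff, and_comm]
  · intro r _ hr
    simp only [szS, of_apply]
    rw [if_neg, zero_mul]
    rintro ⟨h1, h2⟩
    exact hr (Prod.ext h2.symm h1.symm)
  · simp

lemma dotc_szT_mulVec_szS_mulVec {φ : V → V → ℂ} {α : V → ℂ} {ρ : ℝ}
    (heig : szM φ *ᵥ α = (ρ : ℂ) • α) (ψ : V → ℂ) :
    dotc (szT φ *ᵥ ψ) (szS V *ᵥ szT φ *ᵥ α) = ρ * dotc ψ α := by
  rw [dotc_mulVec_left, mulVec_mulVec, mulVec_mulVec, ← szM, heig, dotc_smul_right]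

end Szegedy

/-- Normalization of the Szegedy eigenvectors: if `α` is a unit eigenvector
of `M = T†ST` with real eigenvalue `ρ` and `|ρ| < 1`, then `‖|α,±⟩‖² = 2(1 − ρ²)` and for every
`ψ ∈ ℂ^V`, `|⟨Tψ, |α,±⟩⟩|² / ‖|α,±⟩‖² = ½ |⟨ψ, α⟩|²`; if `|ρ| = 1` then `‖Tα‖ = 1` and
`⟨Tψ, Tα⟩ = ⟨ψ, α⟩` for every `ψ`. -/
theorem szegedy_eigenvector_normalization
    {V : Type} [Fintype V] [DecidableEq V]
    (φ : V → V → ℂ) (hφ : ∀ v, ∑ w, ‖φ v w‖ ^ 2 = 1)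
    (α : V → ℂ) (ρ : ℝ)
    (heig : (szM φ).mulVec α = (ρ : ℂ) • α) (hunit : dotc α α = 1) :
    (|ρ| < 1 →
      norm2 (szVecPlus φ α ρ) = 2 * (1 - ρ ^ 2) ∧
      norm2 (szVecMinus φ α ρ) = 2 * (1 - ρ ^ 2) ∧
      ∀ ψ : V → ℂ,
        ‖dotc ((szT φ).mulVec ψ) (szVecPlus φ α ρ)‖ ^ 2 / norm2 (szVecPlus φ α ρ)
            = (1 / 2) * ‖dotc ψ α‖ ^ 2 ∧
        ‖dotc ((szT φ).mulVec ψ) (szVecMinus φ α ρ)‖ ^ 2 / norm2 (szVecMinus φ α ρ)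
            = (1 / 2) * ‖dotc ψ α‖ ^ 2) ∧
    (|ρ| = 1 →
      norm2 ((szT φ).mulVec α) = 1 ∧
      ∀ ψ : V → ℂ, dotc ((szT φ).mulVec ψ) ((szT φ).mulVec α) = dotc ψ α) := by
  have hT := dotc_mulVec_mulVec_of_conjTranspose_mul_self (szT_conjTranspose_mul_szT hφ)
  have hS : (szS V)ᴴ * szS V = 1 := by rw [szS_conjTranspose, szS_mul_szS]
  have hu : dotc (szT φ *ᵥ α) (szT φ *ᵥ α) = 1 := by rw [hT, hunit]
  have hw : dotc (szS V *ᵥ szT φ *ᵥ α) (szS V *ᵥ szT φ *ᵥ α) = 1 := by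
    rw [dotc_mulVec_mulVec_of_conjTranspose_mul_self hS, hu]
  have hcross := dotc_szT_mulVec_szS_mulVec heig
  have huw : dotc (szT φ *ᵥ α) (szS V *ᵥ szT φ *ᵥ α) = ρ := by rw [hcross, hunit, mul_one]
  refine ⟨fun hρ => ?_, fun _ =>
    ⟨Complex.ofReal_injective (by rw [ofReal_norm2, hu, Complex.ofReal_one]), (hT · α)⟩⟩
  have hsq : ρ ^ 2 + √(1 - ρ ^ 2) ^ 2 = 1 := by
    rw [Real.sq_sqrt (by nlinarith [abs_lt.mp hρ])]; ring
  have hcp := norm_ofReal_sub_I_mul_eq_one hsq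
  have hcm := norm_ofReal_add_I_mul_eq_one hsq
  have hrep : ((ρ : ℂ) - Complex.I * √(1 - ρ ^ 2)).re = ρ := by simp
  have hrem : ((ρ : ℂ) + Complex.I * √(1 - ρ ^ 2)).re = ρ := by simp
  exact ⟨norm2_sub_smul_of_norm_eq_one hu hw huw hcp hrep,
    norm2_sub_smul_of_norm_eq_one hu hw huw hcm hrem, fun ψ =>
    ⟨norm_dotc_sub_smul_sq_div hρ hu hw huw hcp hrep (hT ψ α) (hcross ψ),
      norm_dotc_sub_smul_sq_div hρ hu hw huw hcm hrem (hT ψ α) (hcross ψ)⟩⟩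
end

section
/- For every span program P on n boolean variables there exists a span program P† on n boolean variables, dual to P, such that f_{P†}(x) = 1 − f_P(x) for every x ∈ {0,1}^n, and wsize_s(P†, x) = wsize_s(P, x) for every x ∈ {0,1}^n and every cost vector s ∈ [0,∞)^n. -/
open scoped ComplexInnerProductSpace

/-- A span program on `n` boolean variables: an inner product space `ℂ^d`, a target vector,
and input vectors indexed by `Fin m`, each either free (`label i = none`) or labeled by a
pair `(j, b)` (`label i = some (j, b)`, meaning `i ∈ I_{j,b}`). -/
structure SpanProgram (n : ℕ) : Type where
  d : ℕ
  m : ℕ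
  label : Fin m → Option (Fin n × Bool)
  target : EuclideanSpace ℂ (Fin d)
  input : Fin m → EuclideanSpace ℂ (Fin d)

namespace SpanProgram

variable {n : ℕ}

/-- Input vector `i` is available on input `x`: it is free, or labeled `(j, x_j)` for some `j`. -/
def avail (P : SpanProgram n) (x : Fin n → Bool) (i : Fin P.m) : Prop :=
  P.label i = none ∨ ∃ j : Fin n, P.label i = some (j, x j)

instance (P : SpanProgram n) (x : Fin n → Bool) (i : Fin P.m) : Decidable (P.avail x i) :=
  inferInstanceAs (Decidable (P.label i = none ∨ ∃ j : Fin n, P.label i = some (j, x j)))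

/-- The boolean function computed by `P`:  `f_P(x) = 1` iff the target is in the range of
`A ∘ Π(x)`, i.e. the target is a linear combination of the available input vectors. -/
def eval (P : SpanProgram n) (x : Fin n → Bool) : Prop :=
  ∃ w : Fin P.m → ℂ, ∑ i, (if P.avail x i then w i else 0) • P.input i = P.target

/-- The squared cost weight of coordinate `i`:  `s j` if `i ∈ I_{j,b}`, and `0` if `i` is free.
Thus `‖S w‖² = ∑ i, P.cw s i * ‖w i‖²`. -/
def cw (P : SpanProgram n) (s : Fin n → ℝ) (i : Fin P.m) : ℝ :=
  match P.label i with
  | none => 0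
  | some jb => s jb.1

open Classical in
/-- The witness size of `P` on input `x` with costs `s`. -/
noncomputable def wsizex (P : SpanProgram n) (s : Fin n → ℝ) (x : Fin n → Bool) : ℝ :=
  if P.eval x then
    sInf { r : ℝ | ∃ w : Fin P.m → ℂ,
      (∑ i, (if P.avail x i then w i else 0) • P.input i = P.target) ∧
      r = ∑ i, P.cw s i * ‖w i‖ ^ 2 }
  else
    sInf { r : ℝ | ∃ w' : EuclideanSpace ℂ (Fin P.d), ⟪P.target, w'⟫ = 1 ∧
      (∀ i, P.avail x i → ⟪P.input i, w'⟫ = 0) ∧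
      r = ∑ i, P.cw s i * ‖⟪P.input i, w'⟫‖ ^ 2 }

/-- The witness size of `P` with costs `s`, restricted to the domain `D`:
`max_{x ∈ D} wsize_s(P, x)`. -/
noncomputable def wsizeD (P : SpanProgram n) (s : Fin n → ℝ) (D : Set (Fin n → Bool)) : ℝ :=
  sSup { r : ℝ | ∃ x ∈ D, r = P.wsizex s x }

end SpanProgram

/-! The dual lives in `ℂ^(1+m)` with target `e₀`: each labeled input `i` of `P` becomes `e_(1+i)`
with the opposite label, each free one becomes `0`, and the conjugated rows of `(t | -A)` are
added as free inputs. A positive witness `(α, β)` of the dual is then a negative witness `β` of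
`P` with `α = A†β` off `I(x)`, and a negative witness of the dual is `(1, w)` for a positive
witness `w` of `P` supported on `I(x)`. The costs agree up to weight that one side puts on
coordinates where it is unconstrained; with nonnegative costs dropping that weight only helps, so
the infima coincide. That the dual computes `¬f_P` is Farkas' lemma, via orthogonal complements. -/

open ComplexConjugate

theorem Submodule.exists_mem_orthogonal_inner_eq_one {𝕜 E : Type*} [RCLike 𝕜]
    [NormedAddCommGroup E] [InnerProductSpace 𝕜 E] (U : Submodule 𝕜 E)
    [U.HasOrthogonalProjection] {t : E} (ht : t ∉ U) : ∃ w ∈ Uᗮ, inner 𝕜 t w = 1 := by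
  rw [← U.orthogonal_orthogonal, Submodule.mem_orthogonal'] at ht
  push Not at ht
  obtain ⟨w, hw, htw⟩ := ht
  exact ⟨(inner 𝕜 t w)⁻¹ • w, Uᗮ.smul_mem _ hw, by rw [inner_smul_right, inv_mul_cancel₀ htw]⟩

theorem EuclideanSpace.toLp_cons_eq_single_zero_one_iff {𝕜 : Type*} [RCLike 𝕜] {N : ℕ} (a : 𝕜)
    (g : Fin N → 𝕜) :
    WithLp.toLp 2 (Fin.cons a g : Fin (N + 1) → 𝕜) = EuclideanSpace.single 0 1 ↔
      a = 1 ∧ ∀ i, g i = 0 := by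
  rw [← (WithLp.ofLp_injective 2).eq_iff]
  simp [funext_iff, Fin.forall_fin_succ, Pi.single_apply, Fin.succ_ne_zero]

namespace SpanProgram

variable {n : ℕ} (P : SpanProgram n) (x : Fin n → Bool) (s : Fin n → ℝ)

def IsPositiveWitness (w : Fin P.m → ℂ) : Prop :=
  ∑ i, (if P.avail x i then w i else 0) • P.input i = P.target

def IsNegativeWitness (w' : EuclideanSpace ℂ (Fin P.d)) : Prop :=
  ⟪P.target, w'⟫ = 1 ∧ ∀ i, P.avail x i → ⟪P.input i, w'⟫ = 0

noncomputable def cost (w : Fin P.m → ℂ) : ℝ :=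
  ∑ i, P.cw s i * ‖w i‖ ^ 2

theorem wsizex_of_eval (h : P.eval x) :
    P.wsizex s x = sInf {r | ∃ w, P.IsPositiveWitness x w ∧ r = P.cost s w} := by
  rw [wsizex, if_pos h]
  rfl

theorem wsizex_of_not_eval (h : ¬P.eval x) :
    P.wsizex s x =
      sInf {r | ∃ w', P.IsNegativeWitness x w' ∧ r = P.cost s fun i => ⟪P.input i, w'⟫} := by
  rw [wsizex, if_neg h]
  simp only [IsNegativeWitness, cost, and_assoc]

theorem not_isNegativeWitness_of_isPositiveWitness {w : Fin P.m → ℂ}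
    (hw : P.IsPositiveWitness x w) (w' : EuclideanSpace ℂ (Fin P.d)) :
    ¬P.IsNegativeWitness x w' := by
  rintro ⟨htw', hw'⟩
  refine one_ne_zero (htw'.symm.trans ?_)
  rw [← hw, sum_inner]
  refine Finset.sum_eq_zero fun i _ => ?_
  split_ifs with hi
  · rw [inner_smul_left, hw' i hi, mul_zero]
  · rw [zero_smul, inner_zero_left]

theorem not_eval_iff_exists_isNegativeWitness :
    ¬P.eval x ↔ ∃ w', P.IsNegativeWitness x w' := by
  constructor
  · intro h
    let U := Submodule.span ℂ (Set.range fun i => if P.avail x i then P.input i else 0)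
    have htU : P.target ∉ U := by
      rw [Submodule.mem_span_range_iff_exists_fun]
      rintro ⟨c, hc⟩
      refine h ⟨c, hc ▸ Finset.sum_congr rfl fun i _ => ?_⟩
      split_ifs <;> simp
    obtain ⟨w', hw'U, htw'⟩ := U.exists_mem_orthogonal_inner_eq_one htU
    refine ⟨w', htw', fun i hi => U.inner_right_of_mem_orthogonal ?_ hw'U⟩
    exact Submodule.subset_span ⟨i, if_pos hi⟩
  · rintro ⟨w', hw'⟩ ⟨w, hw⟩
    exact P.not_isNegativeWitness_of_isPositiveWitness x hw w' hw'

theorem cw_nonneg (hs : ∀ j, 0 ≤ s j) (i : Fin P.m) : 0 ≤ P.cw s i := by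
  unfold cw
  split
  exacts [le_rfl, hs _]

theorem cw_of_label_eq_none {i : Fin P.m} (h : P.label i = none) : P.cw s i = 0 := by
  rw [cw, h]

theorem cost_le_of_forall_eq_zero_or_eq (hs : ∀ j, 0 ≤ s j) {v w : Fin P.m → ℂ}
    (h : ∀ i, v i = 0 ∨ v i = w i) : P.cost s v ≤ P.cost s w := by
  refine Finset.sum_le_sum fun i _ => ?_
  rcases h i with hi | hi <;> rw [hi]
  simpa using mul_nonneg (P.cw_nonneg s hs i) (sq_nonneg ‖w i‖)

theorem isPositiveWitness_congr {w w' : Fin P.m → ℂ} (h : ∀ i, P.avail x i → w i = w' i) :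
    P.IsPositiveWitness x w ↔ P.IsPositiveWitness x w' := by
  unfold IsPositiveWitness
  rw [Finset.sum_congr rfl fun i _ => by rw [ite_congr rfl (h i) fun _ => rfl]]

theorem isPositiveWitness_iff_of_forall_not_avail {w : Fin P.m → ℂ}
    (h : ∀ i, ¬P.avail x i → w i = 0) :
    P.IsPositiveWitness x w ↔ ∑ i, w i • P.input i = P.target := by
  unfold IsPositiveWitness
  rw [Finset.sum_congr rfl fun i _ => by rw [ite_eq_left_iff.2 fun hi => (h i hi).symm]]

def dualLabel (P : SpanProgram n) : Fin (P.m + P.d) → Option (Fin n × Bool) :=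
  Fin.append (fun i => (P.label i).map fun jb => (jb.1, !jb.2)) fun _ => none

noncomputable def dualInput (P : SpanProgram n) :
    Fin (P.m + P.d) → EuclideanSpace ℂ (Fin (P.m + 1)) :=
  Fin.append (fun i => if P.label i = none then 0 else EuclideanSpace.single i.succ 1)
    fun k => WithLp.toLp 2 (Fin.cons (conj (P.target k)) fun i => -conj (P.input i k))

-- Reducible, so that `Fin P.dual.m` is `Fin (P.m + P.d)` for instance search and rewriting.
@[reducible] noncomputable def dual : SpanProgram n where
  d := P.m + 1
  m := P.m + P.d
  label := P.dualLabel
  target := EuclideanSpace.single 0 1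
  input := P.dualInput

theorem dualInput_castAdd (i : Fin P.m) :
    P.dualInput (Fin.castAdd P.d i) =
      if P.label i = none then 0 else EuclideanSpace.single i.succ 1 :=
  Fin.append_left _ _ i

theorem dualInput_natAdd (k : Fin P.d) :
    P.dualInput (Fin.natAdd P.m k) =
      WithLp.toLp 2 (Fin.cons (conj (P.target k)) fun i => -conj (P.input i k)) :=
  Fin.append_right _ _ k

theorem dual_avail_castAdd (i : Fin P.m) :
    P.dual.avail x (Fin.castAdd P.d i) ↔ P.label i = none ∨ ¬P.avail x i := by
  simp only [avail, dualLabel, Fin.append_left]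
  rcases P.label i with _ | ⟨j, b⟩
  · simp
  · cases b <;> cases x j <;> simp

theorem dual_avail_natAdd (k : Fin P.d) : P.dual.avail x (Fin.natAdd P.m k) :=
  Or.inl (Fin.append_right _ _ k : P.dualLabel (Fin.natAdd P.m k) = none)

theorem dual_cw_castAdd (i : Fin P.m) : P.dual.cw s (Fin.castAdd P.d i) = P.cw s i := by
  simp only [cw, dualLabel, Fin.append_left]
  rcases P.label i with _ | ⟨j, b⟩ <;> rfl

theorem dual_cw_natAdd (k : Fin P.d) : P.dual.cw s (Fin.natAdd P.m k) = 0 := by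
  simp [cw, dualLabel]

theorem dual_cost (W : Fin (P.m + P.d) → ℂ) :
    P.dual.cost s W = P.cost s fun i => W (Fin.castAdd P.d i) := by
  rw [cost, Fin.sum_univ_add]
  simp only [dual_cw_castAdd, dual_cw_natAdd, zero_mul, Finset.sum_const_zero, add_zero]
  rfl

theorem dual_smul_input_castAdd (W : Fin (P.m + P.d) → ℂ) (i : Fin P.m) :
    (if P.dual.avail x (Fin.castAdd P.d i) then W (Fin.castAdd P.d i) else 0) •
        P.dual.input (Fin.castAdd P.d i) =
      EuclideanSpace.single i.succ (if P.avail x i then 0 else W (Fin.castAdd P.d i)) := by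
  simp only [dualInput_castAdd, dual_avail_castAdd]
  ext j
  by_cases hl : P.label i = none
  · simp [hl, show P.avail x i from Or.inl hl]
  · by_cases hi : P.avail x i <;> simp [hl, hi, PiLp.single_apply]

theorem dual_smul_input_natAdd (W : Fin (P.m + P.d) → ℂ) (k : Fin P.d) :
    (if P.dual.avail x (Fin.natAdd P.m k) then W (Fin.natAdd P.m k) else 0) •
        P.dual.input (Fin.natAdd P.m k) =
      W (Fin.natAdd P.m k) •
        WithLp.toLp 2 (Fin.cons (conj (P.target k)) fun i => -conj (P.input i k)) := by
  simp only [if_pos (P.dual_avail_natAdd x k), dualInput_natAdd]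

theorem dual_sum_smul_input (α : Fin P.m → ℂ) (β : EuclideanSpace ℂ (Fin P.d)) :
    ∑ j, (if P.dual.avail x j then Fin.append α β j else 0) • P.dual.input j =
      WithLp.toLp 2 (Fin.cons ⟪P.target, β⟫ fun i =>
        (if P.avail x i then 0 else α i) - ⟪P.input i, β⟫) := by
  rw [Fin.sum_univ_add,
    Finset.sum_congr rfl fun i _ => P.dual_smul_input_castAdd x (Fin.append α β) i,
    Finset.sum_congr rfl fun k _ => P.dual_smul_input_natAdd x (Fin.append α β) k]
  simp only [Fin.append_left, Fin.append_right]
  ext c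
  cases c using Fin.cases
  all_goals simp [PiLp.inner_apply, Pi.single_apply, Fin.succ_ne_zero, sub_eq_add_neg]

theorem dual_isPositiveWitness_append_iff (α : Fin P.m → ℂ) (β : EuclideanSpace ℂ (Fin P.d)) :
    P.dual.IsPositiveWitness x (Fin.append α β) ↔
      P.IsNegativeWitness x β ∧ ∀ i, ¬P.avail x i → α i = ⟪P.input i, β⟫ := by
  rw [IsPositiveWitness, dual_sum_smul_input, EuclideanSpace.toLp_cons_eq_single_zero_one_iff,
    IsNegativeWitness, and_assoc, ← forall_and]
  refine and_congr_right fun _ => forall_congr' fun i => ?_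
  by_cases hi : P.avail x i <;> simp [hi, sub_eq_zero]

theorem dual_isPositiveWitness_iff (W : Fin (P.m + P.d) → ℂ) :
    P.dual.IsPositiveWitness x W ↔
      P.IsNegativeWitness x (WithLp.toLp 2 fun k => W (Fin.natAdd P.m k)) ∧
        ∀ i, ¬P.avail x i →
          W (Fin.castAdd P.d i) = ⟪P.input i, WithLp.toLp 2 fun k => W (Fin.natAdd P.m k)⟫ := by
  simpa only [WithLp.ofLp_toLp, Fin.append_castAdd_natAdd] using
    P.dual_isPositiveWitness_append_iff x (fun i => W (Fin.castAdd P.d i))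
      (WithLp.toLp 2 fun k => W (Fin.natAdd P.m k))

theorem dual_eval_iff : P.dual.eval x ↔ ¬P.eval x := by
  rw [not_eval_iff_exists_isNegativeWitness]
  constructor
  · rintro ⟨W, hW⟩
    exact ⟨_, ((P.dual_isPositiveWitness_iff x W).1 hW).1⟩
  · rintro ⟨w', hw'⟩
    exact ⟨_, (P.dual_isPositiveWitness_append_iff x _ w').2 ⟨hw', fun _ _ => rfl⟩⟩

theorem inner_dualInput_castAdd (W : EuclideanSpace ℂ (Fin (P.m + 1))) (i : Fin P.m) :
    ⟪P.dualInput (Fin.castAdd P.d i), W⟫ = if P.label i = none then 0 else W i.succ := by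
  simp only [dualInput_castAdd]
  split_ifs <;> simp [EuclideanSpace.inner_single_left]

theorem inner_dualInput_natAdd (W : EuclideanSpace ℂ (Fin (P.m + 1))) (k : Fin P.d) :
    ⟪P.dualInput (Fin.natAdd P.m k), W⟫ = P.target k * W 0 - ∑ i, P.input i k * W i.succ := by
  simp [dualInput_natAdd, PiLp.inner_apply, Fin.sum_univ_succ, sub_eq_add_neg, mul_comm]

theorem dual_isNegativeWitness_iff (W : EuclideanSpace ℂ (Fin (P.m + 1))) :
    P.dual.IsNegativeWitness x W ↔
      W 0 = 1 ∧ (∀ i, ¬P.avail x i → W i.succ = 0) ∧ P.IsPositiveWitness x fun i => W i.succ := by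
  simp only [IsNegativeWitness, Fin.forall_fin_add, EuclideanSpace.inner_single_left, map_one,
    one_mul, inner_dualInput_castAdd, inner_dualInput_natAdd, dual_avail_castAdd,
    P.dual_avail_natAdd x, true_imp_iff]
  refine and_congr_right fun h0 => ?_
  have hzero : (∀ i, P.label i = none ∨ ¬P.avail x i →
      (if P.label i = none then 0 else W i.succ) = 0) ↔ ∀ i, ¬P.avail x i → W i.succ = 0 := by
    refine forall_congr' fun i => ?_
    by_cases hl : P.label i = none
    · simp [hl, show P.avail x i from Or.inl hl]
    · simp [hl]
  rw [hzero]
  refine and_congr_right fun hz => ?_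
  rw [isPositiveWitness_iff_of_forall_not_avail _ _ hz, ← (WithLp.ofLp_injective 2).eq_iff,
    funext_iff]
  simp only [h0, sub_eq_zero, WithLp.ofLp_sum, Finset.sum_apply, PiLp.smul_apply, smul_eq_mul]
  exact forall_congr' fun k => by rw [eq_comm, mul_one]; simp only [mul_comm]

theorem dual_cost_inner (W : EuclideanSpace ℂ (Fin (P.m + 1))) :
    (P.dual.cost s fun j => ⟪P.dual.input j, W⟫) = P.cost s fun i => W i.succ := by
  rw [dual_cost]
  refine Finset.sum_congr rfl fun i _ => ?_
  simp only [inner_dualInput_castAdd]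
  split_ifs with hl
  · simp [P.cw_of_label_eq_none s hl]
  · rfl

theorem wsizex_dual_of_not_eval (hs : ∀ j, 0 ≤ s j) (h : ¬P.eval x) :
    P.dual.wsizex s x = P.wsizex s x := by
  rw [wsizex_of_eval _ _ _ ((P.dual_eval_iff x).2 h), wsizex_of_not_eval _ _ _ h]
  apply csInf_eq_csInf_of_forall_exists_le
  · rintro _ ⟨W, hW, rfl⟩
    obtain ⟨hβ, hα⟩ := (P.dual_isPositiveWitness_iff x W).1 hW
    refine ⟨_, ⟨_, hβ, rfl⟩, ?_⟩
    rw [dual_cost]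
    refine P.cost_le_of_forall_eq_zero_or_eq s hs fun i => ?_
    by_cases hi : P.avail x i
    exacts [Or.inl (hβ.2 i hi), Or.inr (hα i hi).symm]
  · rintro _ ⟨w', hw', rfl⟩
    refine ⟨_, ⟨_, (P.dual_isPositiveWitness_append_iff x _ w').2 ⟨hw', fun _ _ => rfl⟩, rfl⟩, ?_⟩
    rw [dual_cost]
    simp only [Fin.append_left, le_rfl]

theorem wsizex_dual_of_eval (hs : ∀ j, 0 ≤ s j) (h : P.eval x) :
    P.dual.wsizex s x = P.wsizex s x := by
  rw [wsizex_of_not_eval _ _ _ fun hd => (P.dual_eval_iff x).1 hd h, wsizex_of_eval _ _ _ h]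
  apply csInf_eq_csInf_of_forall_exists_le
  · rintro _ ⟨W, hW, rfl⟩
    obtain ⟨-, -, hw⟩ := (P.dual_isNegativeWitness_iff x W).1 hW
    exact ⟨_, ⟨_, hw, rfl⟩, (P.dual_cost_inner s W).ge⟩
  · rintro _ ⟨w, hw, rfl⟩
    let W : EuclideanSpace ℂ (Fin (P.m + 1)) :=
      WithLp.toLp 2 (Fin.cons 1 fun i => if P.avail x i then w i else 0)
    have hW : P.dual.IsNegativeWitness x W := by
      refine (P.dual_isNegativeWitness_iff x W).2 ⟨rfl, fun i hi => if_neg hi, ?_⟩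
      exact (P.isPositiveWitness_congr x fun i hi => if_pos hi).2 hw
    refine ⟨_, ⟨W, hW, rfl⟩, ?_⟩
    rw [dual_cost_inner]
    refine P.cost_le_of_forall_eq_zero_or_eq s hs fun i => ?_
    by_cases hi : P.avail x i
    exacts [Or.inr (if_pos hi), Or.inl (if_neg hi)]

end SpanProgram

/-- Every span program has a dual span program computing the complementary
function, with exactly the same witness sizes for all inputs and all cost vectors. -/
theorem spanProgram_dual_exists (n : ℕ) (P : SpanProgram n) :
    ∃ Pd : SpanProgram n,
      (∀ x : Fin n → Bool, (Pd.eval x ↔ ¬ P.eval x)) ∧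
      ∀ (s : Fin n → ℝ), (∀ j, 0 ≤ s j) →
        ∀ x : Fin n → Bool, Pd.wsizex s x = P.wsizex s x := by
  refine ⟨P.dual, P.dual_eval_iff, fun s hs x => ?_⟩
  by_cases h : P.eval x
  · exact P.wsizex_dual_of_eval x s hs h
  · exact P.wsizex_dual_of_not_eval x s hs h
end
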